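/- arXiv:1010.1156 — 2 statements merged into one kernel-verified Lean document; each statement's English description precedes it below -/
import Mathlib

section
/- For every x ∈ N(f), the set [{x}] is nowhere dense. -/
open Set Topology Function

variable {X : Type*}

/-- `A` is mod-f-invariant: `g(A \ S) ⊆ A`. -/
def ModInv (g : X → X) (S A : Set X) : Prop := g '' (A \ S) ⊆ A

/-- `A` is fully mod-f-invariant: both `A` and its complement are mod-f-invariant. -/
def FullInv (g : X → X) (S A : Set X) : Prop := ModInv g S A ∧ ModInv g S Aᶜ

/-- The least fully mod-f-invariant set containing `A`. -/
def fullHull (g : X → X) (S A : Set X) : Set X := ⋂₀ {B | FullInv g S B ∧ A ⊆ B}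

/-- The least mod-f-invariant set containing `A`. -/
def modHull (g : X → X) (S A : Set X) : Set X := ⋂₀ {B | ModInv g S B ∧ A ⊆ B}

/-- `R(A)`: points whose orbit reaches `A` before hitting `S`. -/
def Reach (g : X → X) (S A : Set X) : Set X :=
  {x | ∃ n : ℕ, (∀ k < n, g^[k] x ∉ S) ∧ g^[n] x ∈ A}

variable [TopologicalSpace X]

/-- A set is regular open if it equals the interior of its closure. -/
def RegOpen (O : Set X) : Prop := O = interior (closure O)

/-- `cofInv f`: the nonempty regular open fully mod-f-invariant sets. -/
def CofInv (g : X → X) (S : Set X) : Set (Set X) :=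
  {D | D.Nonempty ∧ RegOpen D ∧ FullInv g S D}

/-- A minimal element of `cofInv f`. -/
def MinCofInv (g : X → X) (S : Set X) (D : Set X) : Prop :=
  D ∈ CofInv g S ∧ ∀ E ∈ CofInv g S, E ⊆ D → E = D

/-- `coInv f`: the nonempty regular open mod-f-invariant sets. -/
def CoInv (g : X → X) (S : Set X) : Set (Set X) :=
  {U | U.Nonempty ∧ RegOpen U ∧ ModInv g S U}

/-- A transitive element of `coInv f`. -/
def TransElem (g : X → X) (S : Set X) (U : Set X) : Prop :=
  U ∈ CoInv g S ∧ ∀ V ∈ CoInv g S, V ⊆ U → V = U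

/-- A transitive cascade: a decreasing sequence of elements of `coInv f` that is
eventually inside every element of `coInv f` meeting its first term. -/
def IsCascade (g : X → X) (S : Set X) (γ : ℕ → Set X) : Prop :=
  Antitone γ ∧ (∀ n, γ n ∈ CoInv g S) ∧
    ∀ V ∈ CoInv g S, (V ∩ γ 0).Nonempty → ∃ m, γ m ⊆ V

/-- The core of a cascade. -/
def Core (γ : ℕ → Set X) : Set X := ⋂ n, closure (γ n)

/-- The domain of a cascade. -/
def Domain (g : X → X) (S : Set X) (γ : ℕ → Set X) : Set X :=
  interior (closure (⋃₀ {U | U ∈ CoInv g S ∧ γ 0 ⊆ U ∧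
    ∀ V ∈ CoInv g S, (V ∩ U).Nonempty → ∃ m, γ m ⊆ V}))

/-- `Germ x`: the intersection of the closures of the elements of `cofInv f` containing `x`. -/
def Germ (g : X → X) (S : Set X) (x : X) : Set X :=
  ⋂ D ∈ {D | D ∈ CofInv g S ∧ x ∈ D}, closure D

/-- `M(f)`: the union of all minimal elements of `cofInv f`. -/
def MinUnion (g : X → X) (S : Set X) : Set X := ⋃₀ {D | MinCofInv g S D}

/-- `N(f) = X \ cl(M(f))`. -/
def NonMin (g : X → X) (S : Set X) : Set X := (closure (MinUnion g S))ᶜ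

theorem fullHull_spec (g : X → X) (S A : Set X) :
    FullInv g S (fullHull g S A) ∧ A ⊆ fullHull g S A ∧
      ∀ B, FullInv g S B → A ⊆ B → fullHull g S A ⊆ B := by
  refine ⟨⟨?_, ?_⟩, ?_, ?_⟩
  · rintro y ⟨z, ⟨hz, hzS⟩, rfl⟩ B hB
    exact hB.1.1 ⟨z, ⟨hz B hB, hzS⟩, rfl⟩
  · rintro y ⟨z, ⟨hz, hzS⟩, rfl⟩ hy
    simp only [fullHull, mem_compl_iff, mem_sInter, not_forall] at hz
    obtain ⟨B, hB, hzB⟩ := hz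
    exact hB.1.2 ⟨z, ⟨hzB, hzS⟩, rfl⟩ (hy B hB)
  · exact fun a ha B hB => hB.2 ha
  · exact fun B hB hAB => sInter_subset_of_mem ⟨hB, hAB⟩

theorem modInv_closure' (g : X → X) (S : Set X)
    (hreg1 : ∀ O : Set X, IsOpen O → IsOpen (g ⁻¹' O \ S))
    {A : Set X} (hA : ModInv g S A) : ModInv g S (closure A) := by
  rintro y ⟨z, ⟨hz, hzS⟩, rfl⟩
  rw [mem_closure_iff]
  intro O hO hgz
  rw [mem_closure_iff] at hz
  obtain ⟨a, ha, haA⟩ := hz _ (hreg1 O hO) ⟨hgz, hzS⟩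
  exact ⟨g a, ha.1, hA ⟨a, ⟨haA, ha.2⟩, rfl⟩⟩

theorem modInv_interior' (g : X → X) (S : Set X)
    (hreg2 : ∀ O : Set X, IsOpen O → IsOpen (g '' (O \ S)))
    {A : Set X} (hA : ModInv g S A) : ModInv g S (interior A) := by
  have h1 : g '' (interior A \ S) ⊆ A :=
    (image_mono (f := g) (diff_subset_diff_left interior_subset)).trans hA
  exact interior_maximal h1 (hreg2 _ isOpen_interior)

theorem regOpen_int_cl (A : Set X) : RegOpen (interior (closure A)) := by
  refine subset_antisymm (interior_maximal subset_closure isOpen_interior) ?_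
  have : closure (interior (closure A)) ⊆ closure A := by
    simpa using closure_mono (interior_subset : interior (closure A) ⊆ closure A)
  exact interior_mono this

theorem stmt7 {X : Type*} [MetricSpace X] [CompleteSpace X]
    [TopologicalSpace.SeparableSpace X] [∀ x : X, (𝓝[≠] x).NeBot]
    (g : X → X) (S : Set X) (hScl : IsClosed S) (hSnd : IsNowhereDense S)
    (hreg1 : ∀ O : Set X, IsOpen O → IsOpen (g ⁻¹' O \ S))
    (hreg2 : ∀ O : Set X, IsOpen O → IsOpen (g '' (O \ S))) (x : X) (hx : x ∈ NonMin g S) :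
    IsNowhereDense (fullHull g S {x}) := by
  by_contra hnd
  set H := fullHull g S ({x} : Set X) with hH
  obtain ⟨hHfull, hxH, hmin⟩ := fullHull_spec g S ({x} : Set X)
  set D := interior (closure H) with hD
  have hDne : D.Nonempty := nonempty_iff_ne_empty.2 hnd
  have hDreg : RegOpen D := regOpen_int_cl H
  have hDfull : FullInv g S D := by
    constructor
    · exact modInv_interior' _ _ hreg2 (modInv_closure' _ _ hreg1 hHfull.1)
    · have hcompl : Dᶜ = closure (interior Hᶜ) := by
        rw [hD, ← closure_compl, interior_compl]
      rw [hcompl]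
      exact modInv_closure' _ _ hreg1 (modInv_interior' _ _ hreg2 hHfull.2)
  have hmemD : ∀ E, E ∈ CofInv g S → E ⊆ D → x ∈ E ∧ E = D := by
    intro E hE hED
    obtain ⟨hEne, hEreg, hEfull⟩ := hE
    by_cases hxE : x ∈ E
    · refine ⟨hxE, subset_antisymm hED ?_⟩
      have hHE : H ⊆ E := hmin E hEfull (singleton_subset_iff.2 hxE)
      calc D ⊆ interior (closure E) := interior_mono (closure_mono hHE)
        _ = E := hEreg.symm
    · exfalso
      have hHEc : H ⊆ Eᶜ :=
        hmin Eᶜ ⟨hEfull.2, (compl_compl E).symm ▸ hEfull.1⟩ (singleton_subset_iff.2 hxE)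
      have hEopen : IsOpen E := hEreg ▸ isOpen_interior
      have hcl : closure H ⊆ Eᶜ := closure_minimal hHEc hEopen.isClosed_compl
      obtain ⟨e, he⟩ := hEne
      exact hcl (interior_subset (hED he)) he
  have hDmin : MinCofInv g S D :=
    ⟨⟨hDne, hDreg, hDfull⟩, fun E hE hED => (hmemD E hE hED).2⟩
  have hxD : x ∈ D := (hmemD D ⟨hDne, hDreg, hDfull⟩ subset_rfl).1
  exact hx (subset_closure ⟨D, hDmin, hxD⟩)
end

section
/- If D ∈ cofInv(f) with D ⊆ Σ(f), then D = int(cl([S ∩ D])). -/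
open Set Topology Function

variable {X : Type*}

variable [TopologicalSpace X]

lemma fullInv_sInter {X : Type*} {g : X → X} {S : Set X} {T : Set (Set X)}
    (h : ∀ B ∈ T, FullInv g S B) : FullInv g S (⋂₀ T) := by
  constructor
  · rintro y ⟨x, ⟨hx1, hx2⟩, rfl⟩ B hB
    exact (h B hB).1 ⟨x, ⟨hx1 B hB, hx2⟩, rfl⟩
  · rintro y ⟨x, ⟨hx1, hx2⟩, rfl⟩
    simp only [mem_compl_iff, mem_sInter, not_forall] at hx1 ⊢
    obtain ⟨B, hB, hxB⟩ := hx1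
    exact ⟨B, hB, (h B hB).2 ⟨x, ⟨hxB, hx2⟩, rfl⟩⟩

lemma fullInv_fullHull {X : Type*} (g : X → X) (S A : Set X) :
    FullInv g S (fullHull g S A) :=
  fullInv_sInter (fun _ hB => hB.1)

lemma subset_fullHull {X : Type*} (g : X → X) (S A : Set X) :
    A ⊆ fullHull g S A := fun _ hx _ hB => hB.2 hx

lemma fullHull_min {X : Type*} {g : X → X} {S A B : Set X}
    (hB : FullInv g S B) (hAB : A ⊆ B) : fullHull g S A ⊆ B :=
  sInter_subset_of_mem ⟨hB, hAB⟩

theorem stmt19 {X : Type*} [MetricSpace X] [CompleteSpace X]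
    [TopologicalSpace.SeparableSpace X] [∀ x : X, (𝓝[≠] x).NeBot]
    (g : X → X) (S : Set X) (hScl : IsClosed S) (hSnd : IsNowhereDense S)
    (hreg1 : ∀ O : Set X, IsOpen O → IsOpen (g ⁻¹' O \ S))
    (hreg2 : ∀ O : Set X, IsOpen O → IsOpen (g '' (O \ S))) (D : Set X)
    (hD : D ∈ CofInv g S) (hDSig : D ⊆ interior (closure (fullHull g S S))) :
    D = interior (closure (fullHull g S (S ∩ D))) := by
  obtain ⟨hne, hreg, hfull⟩ := hD
  have hDopen : IsOpen D := by rw [hreg]; exact isOpen_interior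
  set H := fullHull g S (S ∩ D) with hHdef
  have hHfull : FullInv g S H := fullInv_fullHull g S (S ∩ D)
  -- H ⊆ D
  have hHD : H ⊆ D := fullHull_min hfull inter_subset_right
  -- B := H ∪ Dᶜ is fully invariant and contains S
  have hBfull : FullInv g S (H ∪ Dᶜ) := by
    constructor
    · rintro y ⟨x, ⟨hx1, hx2⟩, rfl⟩
      rcases hx1 with hx1 | hx1
      · exact Or.inl (hHfull.1 ⟨x, ⟨hx1, hx2⟩, rfl⟩)
      · exact Or.inr (hfull.2 ⟨x, ⟨hx1, hx2⟩, rfl⟩)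
    · rintro y ⟨x, ⟨hx1, hx2⟩, rfl⟩
      rw [compl_union, compl_compl] at hx1 ⊢
      exact ⟨hHfull.2 ⟨x, ⟨hx1.1, hx2⟩, rfl⟩, hfull.1 ⟨x, ⟨hx1.2, hx2⟩, rfl⟩⟩
  have hSB : S ⊆ H ∪ Dᶜ := fun x hx => by
    by_cases hxD : x ∈ D
    · exact Or.inl (subset_fullHull g S (S ∩ D) ⟨hx, hxD⟩)
    · exact Or.inr hxD
  have hKB : fullHull g S S ⊆ H ∪ Dᶜ := fullHull_min hBfull hSB
  apply Subset.antisymm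
  · -- D ⊆ int cl H
    intro x hx
    have hopen : IsOpen (D ∩ interior (closure (fullHull g S S))) :=
      hDopen.inter isOpen_interior
    have hsub : D ∩ interior (closure (fullHull g S S)) ⊆ closure H := by
      intro y hy
      have : y ∈ D ∩ closure (fullHull g S S) := ⟨hy.1, interior_subset hy.2⟩
      have h2 : y ∈ closure (D ∩ fullHull g S S) := hDopen.inter_closure this
      refine closure_mono ?_ h2
      rintro z ⟨hzD, hzK⟩
      rcases hKB hzK with h | h
      · exact h
      · exact absurd hzD h
    exact interior_maximal hsub hopen ⟨hx, hDSig hx⟩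
  · -- int cl H ⊆ D
    calc interior (closure H) ⊆ interior (closure D) :=
          interior_mono (closure_mono hHD)
      _ = D := hreg.symm
end
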